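/- arXiv:1801.08820 — 2 statements merged into one kernel-verified Lean document; each statement's English description precedes it below -/
import Mathlib

section
/- Let p be a prime, r ≥ 2p+2 an integer, and let F(X,Y) = Σ_{0 ≤ j ≤ r} c_j X^{r-j} Y^j be a homogeneous polynomial of degree r over F_p such that any two indices j, k with c_j ≠ 0 and c_k ≠ 0 satisfy j ≡ k (mod p-1). Then θ^2 divides F in F_p[X,Y], where θ = X^p Y - X Y^p, if and only if c_0 = c_1 = c_{r-1} = c_r = 0 and Σ_j c_j = 0 and Σ_j j·c_j = 0 in F_p. -/
/-!
With `q = p - 1` we have `θ = X Y (X^q - Y^q)`, a product of pairwise coprime factors, so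
`θ² ∣ F` iff `X²`, `Y²` and `(X^q - Y^q)²` all divide `F`.

Necessity: `θ` vanishes at `(1,0)`, `(0,1)` and `(1,1)`, hence so do `F` and its partial
derivatives, and the six resulting values are `c₀`, `c₁`, `c_{r-1}`, `c_r`, `∑ cⱼ`, `∑ j cⱼ`.

Sufficiency: the vanishing of `c₀, c₁, c_{r-1}, c_r` gives `X² ∣ F` and `Y² ∣ F`. The residue
condition writes every surviving term as `cⱼ X^β Yʲ (X^q)^{nⱼ}` with `j + q nⱼ` independent of
`j`, and `aⁿ b ≡ bⁿ⁺¹ + n bⁿ (a - b) mod (a - b)²` for `a = X^q`, `b = Y^q` reduces `Y^q F`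
modulo `(X^q - Y^q)²` to a combination of `∑ cⱼ` and `∑ nⱼ cⱼ`. As `q = -1` in `𝔽_p`,
`nⱼ = j + β - r` there, so both sums vanish.
-/

open MvPolynomial

section SubSq

variable {R : Type*} [CommRing R]

theorem sub_sq_dvd_pow_mul_sub (a b : R) (n : ℕ) :
    (a - b) ^ 2 ∣ a ^ n * b - b ^ (n + 1) - n * b ^ n * (a - b) := by
  -- `aⁿ b = aⁿ⁺¹ - aⁿ (a - b)` and `a - b ∣ aⁿ - bⁿ`
  have h₁ := sq_dvd_add_pow_sub_sub (a - b) b (n + 1)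
  have h₂ := mul_dvd_mul (sub_dvd_pow_sub_pow a b n) (dvd_refl (a - b))
  rw [add_sub_cancel, Nat.add_sub_cancel] at h₁
  rw [← sq] at h₂
  convert h₁.sub h₂ using 1
  push_cast
  ring

theorem sub_sq_dvd_mul_sum {ι : Type*} (s : Finset ι) (a b e : R) (c f : ι → R) (n : ι → ℕ)
    (he : ∀ i ∈ s, c i * f i * b ^ n i = c i * e) (h₀ : ∑ i ∈ s, c i = 0)
    (h₁ : ∑ i ∈ s, n i * c i = 0) :
    (a - b) ^ 2 ∣ b * ∑ i ∈ s, c i * f i * a ^ n i := by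
  have key : ∀ i ∈ s, (a - b) ^ 2 ∣
      b * (c i * f i * a ^ n i) - (c i * e * b + n i * c i * e * (a - b)) := by
    intro i hi
    convert (sub_sq_dvd_pow_mul_sub a b (n i)).mul_left (c i * f i) using 1
    linear_combination (b + n i * (a - b)) * he i hi
  have hsum : ∑ i ∈ s, (c i * e * b + n i * c i * e * (a - b)) = 0 := by
    rw [Finset.sum_add_distrib, ← Finset.sum_mul, ← Finset.sum_mul, ← Finset.sum_mul,
      ← Finset.sum_mul, h₀, h₁]
    ring
  simpa [Finset.mul_sum, Finset.sum_sub_distrib, hsum] using Finset.dvd_sum key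

end SubSq

theorem pow_mul_sub_mul_pow_eq {A : Type*} [CommRing A] (a b : A) {p : ℕ} (hp : 1 ≤ p) :
    a ^ p * b - a * b ^ p = a * b * (a ^ (p - 1) - b ^ (p - 1)) := by
  obtain ⟨q, rfl⟩ := Nat.exists_eq_add_of_le' hp
  simp only [Nat.add_sub_cancel]
  ring

theorem exists_forall_sub_mod_eq {M : Type*} [Zero M] (r q : ℕ) (c : ℕ → M)
    (hc : ∀ j ≤ r, ∀ k ≤ r, c j ≠ 0 → c k ≠ 0 → j % q = k % q) :
    ∃ β, ∀ j ≤ r, c j ≠ 0 → (r - j) % q = β := by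
  by_cases hsupp : ∃ k ≤ r, c k ≠ 0
  · obtain ⟨k, hkr, hck⟩ := hsupp
    refine ⟨(r - k) % q, fun j hjr hcj ↦ ?_⟩
    refine Nat.ModEq.add_right_cancel (hc j hjr k hkr hcj hck) ?_
    rw [Nat.sub_add_cancel hjr, Nat.sub_add_cancel hkr]
  · exact ⟨0, fun j hjr hcj ↦ (hsupp ⟨j, hjr, hcj⟩).elim⟩

namespace MvPolynomial

theorem eval_pderiv_eq_zero_of_sq_dvd {σ R : Type*} [CommSemiring R]
    {f g : MvPolynomial σ R} (hgf : g ^ 2 ∣ f) {z : σ → R} (hz : eval z g = 0) (i : σ) :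
    eval z (pderiv i f) = 0 := by
  obtain ⟨h, rfl⟩ := hgf
  simp [hz]

theorem isRelPrime_X_of_eval_ne_zero {σ R : Type*} [CommRing R] [IsDomain R]
    {i : σ} {f : MvPolynomial σ R} {z : σ → R} (hz : z i = 0) (hf : eval z f ≠ 0) :
    IsRelPrime (X i) f :=
  X_prime.irreducible.isRelPrime_iff_not_dvd.mpr fun ⟨g, hg⟩ ↦ hf (by simp [hg, hz])

end MvPolynomial

section BinaryForm

variable {R : Type*} [CommSemiring R] (r : ℕ) (c : ℕ → R)

noncomputable def binaryForm : MvPolynomial (Fin 2) R :=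
  ∑ j ∈ Finset.range (r + 1), C (c j) * X 0 ^ (r - j) * X 1 ^ j

theorem eval_binaryForm (x y : R) :
    eval ![x, y] (binaryForm r c) = ∑ j ∈ Finset.range (r + 1), c j * x ^ (r - j) * y ^ j := by
  simp [binaryForm]

theorem eval_pderiv_zero_binaryForm (x y : R) :
    eval ![x, y] (pderiv 0 (binaryForm r c)) =
      ∑ j ∈ Finset.range (r + 1), (r - j : ℕ) * c j * x ^ (r - j - 1) * y ^ j := by
  rw [binaryForm, map_sum, map_sum]
  refine Finset.sum_congr rfl fun j _ ↦ ?_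
  simp [pderiv_X]
  ring

theorem eval_pderiv_one_binaryForm (x y : R) :
    eval ![x, y] (pderiv 1 (binaryForm r c)) =
      ∑ j ∈ Finset.range (r + 1), j * c j * x ^ (r - j) * y ^ (j - 1) := by
  rw [binaryForm, map_sum, map_sum]
  refine Finset.sum_congr rfl fun j _ ↦ ?_
  simp [pderiv_X]
  ring

theorem binaryForm_eval_one_zero : eval ![1, 0] (binaryForm r c) = c 0 := by
  simp [eval_binaryForm, zero_pow_eq]

theorem binaryForm_eval_zero_one : eval ![0, 1] (binaryForm r c) = c r := by
  rw [eval_binaryForm, Finset.sum_eq_single_of_mem r (by simp)]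
  · simp
  · intro j hj hjr
    simp [zero_pow (by grind : r - j ≠ 0)]

theorem binaryForm_eval_one_one :
    eval ![1, 1] (binaryForm r c) = ∑ j ∈ Finset.range (r + 1), c j := by
  simp [eval_binaryForm]

theorem binaryForm_pderiv_one_eval_one_zero (hr : 1 ≤ r) :
    eval ![1, 0] (pderiv 1 (binaryForm r c)) = c 1 := by
  rw [eval_pderiv_one_binaryForm, Finset.sum_eq_single_of_mem 1 (by simp; omega)]
  · simp
  · intro j hj hj1
    rcases Nat.eq_zero_or_pos j with rfl | hj0
    · simp
    · simp [zero_pow (by omega : j - 1 ≠ 0)]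

theorem binaryForm_pderiv_zero_eval_zero_one (hr : 1 ≤ r) :
    eval ![0, 1] (pderiv 0 (binaryForm r c)) = c (r - 1) := by
  rw [eval_pderiv_zero_binaryForm, Finset.sum_eq_single_of_mem (r - 1) (by simp)]
  · simp [Nat.sub_sub_self hr]
  · intro j hj hjr
    rcases eq_or_ne j r with rfl | hjr'
    · simp
    · simp [zero_pow (by grind : r - j - 1 ≠ 0)]

theorem binaryForm_pderiv_one_eval_one_one :
    eval ![1, 1] (pderiv 1 (binaryForm r c)) = ∑ j ∈ Finset.range (r + 1), (j : R) * c j := by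
  simp [eval_pderiv_one_binaryForm]

theorem X_zero_sq_dvd_binaryForm (hcr : c r = 0) (hcr' : c (r - 1) = 0) :
    X 0 ^ 2 ∣ binaryForm r c := by
  refine Finset.dvd_sum fun j hj ↦ ?_
  rcases eq_or_ne j r with rfl | hjr
  · simp [hcr]
  rcases eq_or_ne j (r - 1) with rfl | hjr'
  · simp [hcr']
  exact ((pow_dvd_pow _ (by grind : 2 ≤ r - j)).mul_left _).mul_right _

theorem X_one_sq_dvd_binaryForm (hc₀ : c 0 = 0) (hc₁ : c 1 = 0) : X 1 ^ 2 ∣ binaryForm r c := by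
  refine Finset.dvd_sum fun j _ ↦ ?_
  rcases eq_or_ne j 0 with rfl | hj0
  · simp [hc₀]
  rcases eq_or_ne j 1 with rfl | hj1
  · simp [hc₁]
  exact (pow_dvd_pow _ (by omega : 2 ≤ j)).mul_left _

theorem coeff_conditions_of_sq_dvd_binaryForm {R : Type*} [CommRing R] {r : ℕ} {c : ℕ → R}
    (hr : 1 ≤ r) {g : MvPolynomial (Fin 2) R} (hg : g ^ 2 ∣ binaryForm r c)
    (h₁₀ : eval ![1, 0] g = 0) (h₀₁ : eval ![0, 1] g = 0) (h₁₁ : eval ![1, 1] g = 0) :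
    c 0 = 0 ∧ c 1 = 0 ∧ c (r - 1) = 0 ∧ c r = 0 ∧
      (∑ j ∈ Finset.range (r + 1), c j = 0) ∧
      (∑ j ∈ Finset.range (r + 1), (j : R) * c j = 0) := by
  have hF (z : Fin 2 → R) (hz : eval z g = 0) : eval z (binaryForm r c) = 0 :=
    zero_dvd_iff.mp (by simpa [hz] using map_dvd (eval z) hg)
  have hDF (z : Fin 2 → R) (hz : eval z g = 0) (i : Fin 2) :=
    eval_pderiv_eq_zero_of_sq_dvd hg hz i
  refine ⟨?_, ?_, ?_, ?_, ?_, ?_⟩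
  · rw [← binaryForm_eval_one_zero r c, hF _ h₁₀]
  · rw [← binaryForm_pderiv_one_eval_one_zero r c hr, hDF _ h₁₀]
  · rw [← binaryForm_pderiv_zero_eval_zero_one r c hr, hDF _ h₀₁]
  · rw [← binaryForm_eval_zero_one r c, hF _ h₀₁]
  · rw [← binaryForm_eval_one_one r c, hF _ h₁₁]
  · rw [← binaryForm_pderiv_one_eval_one_one r c, hDF _ h₁₁]

end BinaryForm

section ResidueClass

variable {R : Type*} [CommRing R] (r : ℕ) (c : ℕ → R) {q β : ℕ}
  (hβ : ∀ j ≤ r, c j ≠ 0 → (r - j) % q = β)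
include hβ

theorem sub_eq_add_mul_div_of_ne_zero {j : ℕ} (hj : j ∈ Finset.range (r + 1)) (hcj : c j ≠ 0) :
    r - j = β + q * ((r - j) / q) := by
  rw [← hβ j (Finset.mem_range_succ_iff.mp hj) hcj, Nat.mod_add_div]

theorem sum_div_mul_eq_zero (hq : (q : R) = -1) (h₀ : ∑ j ∈ Finset.range (r + 1), c j = 0)
    (h₁ : ∑ j ∈ Finset.range (r + 1), (j : R) * c j = 0) :
    ∑ j ∈ Finset.range (r + 1), (((r - j) / q : ℕ) : R) * c j = 0 := by
  have hn : ∀ j ∈ Finset.range (r + 1),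
      (((r - j) / q : ℕ) : R) * c j = j * c j + (β - r) * c j := by
    intro j hj
    rcases eq_or_ne (c j) 0 with hcj | hcj
    · simp [hcj]
    have := congrArg (Nat.cast : ℕ → R) (sub_eq_add_mul_div_of_ne_zero r c hβ hj hcj)
    push_cast [Nat.cast_sub (Finset.mem_range_succ_iff.mp hj), hq] at this
    linear_combination (c j) * this
  rw [Finset.sum_congr rfl hn, Finset.sum_add_distrib, ← Finset.mul_sum, h₀, h₁, mul_zero,
    add_zero]

theorem sub_sq_dvd_X_one_pow_mul_binaryForm (hq : (q : R) = -1)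
    (h₀ : ∑ j ∈ Finset.range (r + 1), c j = 0)
    (h₁ : ∑ j ∈ Finset.range (r + 1), (j : R) * c j = 0) :
    (X 0 ^ q - X 1 ^ q) ^ 2 ∣ X 1 ^ q * binaryForm r c := by
  have hF : binaryForm r c = ∑ j ∈ Finset.range (r + 1),
      C (c j) * (X 0 ^ β * X 1 ^ j) * (X 0 ^ q) ^ ((r - j) / q) := by
    refine Finset.sum_congr rfl fun j hj ↦ ?_
    rcases eq_or_ne (c j) 0 with hcj | hcj
    · simp [hcj]
    have h := sub_eq_add_mul_div_of_ne_zero r c hβ hj hcj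
    generalize (r - j) / q = n at h ⊢
    rw [h]
    ring
  rw [hF]
  refine sub_sq_dvd_mul_sum _ _ _ (X 0 ^ β * X 1 ^ (r - β)) _ _ _ (fun j hj ↦ ?_) ?_ ?_
  · rcases eq_or_ne (c j) 0 with hcj | hcj
    · simp [hcj]
    have h := sub_eq_add_mul_div_of_ne_zero r c hβ hj hcj
    generalize (r - j) / q = n at h ⊢
    rw [show r - β = j + q * n by grind]
    ring
  · rw [← map_sum, h₀, map_zero]
  · simp only [← map_natCast (C : R →+* MvPolynomial (Fin 2) R), ← map_mul, ← map_sum,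
      sum_div_mul_eq_zero r c hβ hq h₀ h₁, map_zero]

end ResidueClass

theorem X_zero_mul_X_one_mul_sub_sq_dvd {K : Type*} [Field K] {q : ℕ} (hq : q ≠ 0)
    {F : MvPolynomial (Fin 2) K} (h₀ : X 0 ^ 2 ∣ F) (h₁ : X 1 ^ 2 ∣ F)
    (hQ : (X 0 ^ q - X 1 ^ q) ^ 2 ∣ X 1 ^ q * F) :
    (X 0 * X 1 * (X 0 ^ q - X 1 ^ q)) ^ 2 ∣ F := by
  have h01 : IsRelPrime (X 0 : MvPolynomial (Fin 2) K) (X 1) :=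
    isRelPrime_X_of_eval_ne_zero (z := ![0, 1]) rfl (by simp)
  have h0Q : IsRelPrime (X 0 : MvPolynomial (Fin 2) K) (X 0 ^ q - X 1 ^ q) :=
    isRelPrime_X_of_eval_ne_zero (z := ![0, 1]) rfl (by simp [hq])
  have h1Q : IsRelPrime (X 1 : MvPolynomial (Fin 2) K) (X 0 ^ q - X 1 ^ q) :=
    isRelPrime_X_of_eval_ne_zero (z := ![1, 0]) rfl (by simp [hq])
  rw [mul_pow, mul_pow]
  exact (h0Q.pow.mul_left h1Q.pow).mul_dvd (h01.pow.mul_dvd h₀ h₁)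
    (h1Q.pow.symm.dvd_of_dvd_mul_left hQ)

/-- Criterion for divisibility by `θ² = (X^p Y - X Y^p)²` of a homogeneous polynomial of
degree `r ≥ 2p+2` whose nonzero coefficients all lie in a single residue class mod `p-1`. -/
theorem theta_sq_dvd_iff (p : ℕ) (hp : p.Prime) (r : ℕ) (hr : 2 * p + 2 ≤ r)
    (c : ℕ → ZMod p)
    (hc : ∀ j ≤ r, ∀ k ≤ r, c j ≠ 0 → c k ≠ 0 → j % (p - 1) = k % (p - 1)) :
    ((X 0 ^ p * X 1 - X 0 * X 1 ^ p : MvPolynomial (Fin 2) (ZMod p)) ^ 2 ∣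
        ∑ j ∈ Finset.range (r + 1), C (c j) * X 0 ^ (r - j) * X 1 ^ j) ↔
      (c 0 = 0 ∧ c 1 = 0 ∧ c (r - 1) = 0 ∧ c r = 0 ∧
        (∑ j ∈ Finset.range (r + 1), c j = 0) ∧
        (∑ j ∈ Finset.range (r + 1), (j : ZMod p) * c j = 0)) := by
  have := Fact.mk hp
  have hr1 : 1 ≤ r := by omega
  change _ ∣ binaryForm r c ↔ _
  rw [pow_mul_sub_mul_pow_eq _ _ hp.one_le]
  refine ⟨fun hθ ↦ coeff_conditions_of_sq_dvd_binaryForm hr1 hθ (by simp) (by simp) (by simp),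
    ?_⟩
  rintro ⟨hc₀, hc₁, hcr', hcr, h₀, h₁⟩
  have hq : ((p - 1 : ℕ) : ZMod p) = -1 := by
    simp [Nat.cast_sub hp.one_le]
  obtain ⟨β, hβ⟩ := exists_forall_sub_mod_eq r (p - 1) c hc
  exact X_zero_mul_X_one_mul_sub_sq_dvd (Nat.sub_ne_zero_of_lt hp.one_lt)
    (X_zero_sq_dvd_binaryForm r c hcr hcr') (X_one_sq_dvd_binaryForm r c hc₀ hc₁)
    (sub_sq_dvd_X_one_pow_mul_binaryForm r c hβ hq h₀ h₁)
end

section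
/- Let p > 3 be a prime and let r ≥ 3p+2 be an integer such that p does not divide r, p does not divide r-1, and the sum of the base-p digits of r-2 is at least p. Then the 3p+3 polynomials X^r, Y^r, X^{r-1}Y, X^2(jX+Y)^{r-2} for j in F_p, Y^2(X+kY)^{r-2} for k in F_p, and XY(lX+Y)^{r-2} for l in F_p, are linearly independent over F_p in F_p[X,Y]. -/
/-!
Write `r - 2 = n = m + p N` with `m < p`; the divisibility hypotheses say `m ≤ p - 3`. Setting
`X 0 = 1`, the coefficient of `X ^ (k + 2)` combines `choose n (k + 2)`, `choose n (k + 1)`,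
`choose n k` with power sums `∑ c_j j ^ t` of the three weight families, which by Fermat only
depend on `t` modulo `p - 1` (for `t ≠ 0`). In the basis `choose (n + 2) i`, `choose (n + 1) i`,
`choose n i` with `i = k + 2`, the relations of one residue class of `i` share their coefficients
`u, v, w`, and Lucas at `i = x + p M` with `p ∤ choose N M` reduces them to
`u choose (m + 2) x + v choose (m + 1) x + w choose m x = 0`. Such `M` exist with every digit sum
up to that of `N`; as `m` plus that digit sum is at least `p`, each class supplies three distinct
`x`, which forces `u = v = w = 0` (cleared of denominators, the relation is a quadratic in `x`).
Hence all power sums with `t ≠ 0` vanish, the extreme coefficients give `t = 0`, and Vandermonde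
kills the weights.
-/

open Finset

variable {p : ℕ}

theorem pow_eq_pow_of_modEq_card_sub_one {K : Type*} [Field K] [Fintype K] (b : K) {t t' : ℕ}
    (ht : t ≠ 0) (ht' : t' ≠ 0) (h : t ≡ t' [MOD Fintype.card K - 1]) : b ^ t = b ^ t' := by
  rcases eq_or_ne b 0 with rfl | hb
  · rw [zero_pow ht, zero_pow ht']
  · exact pow_eq_pow_of_modEq h (FiniteField.pow_card_sub_one_eq_one b hb)

theorem cast_choose_add_mul [Fact p.Prime] {a x : ℕ} (ha : a < p) (hx : x < p) (N M : ℕ) :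
    ((a + p * N).choose (x + p * M) : ZMod p) = a.choose x * N.choose M := by
  have hp : 0 < p := (Fact.out : p.Prime).pos
  rw [← Nat.cast_mul, (ZMod.natCast_eq_natCast_iff _ _ _).mpr
    Choose.choose_modEq_choose_mod_mul_choose_div_nat]
  simp [Nat.add_mul_mod_self_left, Nat.add_mul_div_left _ _ hp, Nat.mod_eq_of_lt ha,
    Nat.mod_eq_of_lt hx, Nat.div_eq_of_lt ha, Nat.div_eq_of_lt hx]

theorem cast_choose_ne_zero [Fact p.Prime] {a x : ℕ} (ha : a < p) (hx : x ≤ a) :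
    (a.choose x : ZMod p) ≠ 0 := by
  rw [Ne, ZMod.natCast_eq_zero_iff]
  intro hdvd
  have := (Fact.out : p.Prime).dvd_factorial.mp
    (hdvd.mul_right _ |>.mul_right _ |>.trans (Nat.choose_mul_factorial_mul_factorial hx).dvd)
  omega

theorem digits_sum_add_mul (hp : 1 < p) {a : ℕ} (ha : a < p) (N : ℕ) :
    (Nat.digits p (a + p * N)).sum = a + (Nat.digits p N).sum := by
  rcases eq_or_ne a 0 with rfl | ha0
  · rcases eq_or_ne N 0 with rfl | hN
    · simp
    · rw [Nat.digits_add p hp 0 N (by omega) (Or.inr hN)]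
      simp
  · simp [Nat.digits_add p hp a N ha (Or.inl ha0)]

theorem exists_digits_sum_eq_and_choose_ne_zero [Fact p.Prime] (N : ℕ) {s : ℕ}
    (hs : s ≤ (Nat.digits p N).sum) :
    ∃ M, (Nat.digits p M).sum = s ∧ (N.choose M : ZMod p) ≠ 0 := by
  have hp := (Fact.out : p.Prime).one_lt
  induction N using Nat.strong_induction_on generalizing s with
  | _ N ih =>
    rcases eq_or_ne N 0 with rfl | hN
    · exact ⟨0, by simp at hs ⊢; omega, by simp⟩
    obtain ⟨a, N', ha, rfl⟩ : ∃ a N', a < p ∧ N = a + p * N' :=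
      ⟨N % p, N / p, Nat.mod_lt _ (by omega), (Nat.mod_add_div N p).symm⟩
    rw [digits_sum_add_mul hp ha] at hs
    by_cases hsa : s ≤ a
    · refine ⟨s, by simpa using digits_sum_add_mul hp (hsa.trans_lt ha) 0, ?_⟩
      have := cast_choose_add_mul ha (hsa.trans_lt ha) N' 0
      rw [mul_zero, add_zero, Nat.choose_zero_right, Nat.cast_one, mul_one] at this
      exact this ▸ cast_choose_ne_zero ha hsa
    · have hN' : N' < a + p * N' := by
        rcases eq_or_ne N' 0 with rfl | h0
        · omega
        · have := Nat.mul_lt_mul_of_pos_right hp (Nat.pos_of_ne_zero h0)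
          omega
      obtain ⟨M', hM's, hM'⟩ := ih N' hN' (s := s - a) (by omega)
      refine ⟨a + p * M', by rw [digits_sum_add_mul hp ha, hM's]; omega, ?_⟩
      rw [cast_choose_add_mul ha ha, Nat.choose_self, Nat.cast_one, one_mul]
      exact hM'

theorem natCast_inj_of_lt {x y : ℕ} (hx : x < p) (hy : y < p) :
    (x : ZMod p) = y ↔ x = y := by
  rw [ZMod.natCast_eq_natCast_iff', Nat.mod_eq_of_lt hx, Nat.mod_eq_of_lt hy]

theorem natCast_ne_zero_of_lt {a : ℕ} (h0 : a ≠ 0) (ha : a < p) : (a : ZMod p) ≠ 0 := by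
  simpa using (natCast_inj_of_lt ha (by omega : 0 < p)).not.mpr h0

def powerSum (c : ℕ → ZMod p) (t : ℕ) : ZMod p :=
  ∑ j ∈ range p, c j * (j : ZMod p) ^ t

theorem powerSum_eq_of_modEq [Fact p.Prime] (c : ℕ → ZMod p) {t t' : ℕ} (ht : t ≠ 0)
    (ht' : t' ≠ 0) (h : t ≡ t' [MOD p - 1]) : powerSum c t = powerSum c t' :=
  sum_congr rfl fun j _ => by
    rw [pow_eq_pow_of_modEq_card_sub_one _ ht ht' (by rwa [ZMod.card])]

theorem powerSum_eq_zero_of_forall_Ico [Fact p.Prime] {c : ℕ → ZMod p} {a : ℕ} (ha : a ≠ 0)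
    (h : ∀ t ∈ Ico a (a + (p - 1)), powerSum c t = 0) {t : ℕ} (ht : t ≠ 0) :
    powerSum c t = 0 := by
  have hq : 0 < p - 1 := by have := (Fact.out : p.Prime).two_le; omega
  have hqa : a ≤ (p - 1) * a := Nat.le_mul_of_pos_left a hq
  have hmod : t ≡ a + (t + (p - 1) * a - a) % (p - 1) [MOD p - 1] :=
    calc t ≡ t + (p - 1) * a [MOD p - 1] := (Nat.add_mul_mod_self_left t _ a).symm
      _ = a + (t + (p - 1) * a - a) := by omega
      _ ≡ _ [MOD p - 1] := ((Nat.mod_modEq _ _).add_left a).symm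
  rw [powerSum_eq_of_modEq c ht (by omega) hmod]
  exact h _ (mem_Ico.mpr ⟨by omega, by have := Nat.mod_lt (t + (p - 1) * a - a) hq; omega⟩)

theorem eq_zero_of_forall_powerSum_eq_zero [Fact p.Prime] {c : ℕ → ZMod p}
    (h : ∀ t < p, powerSum c t = 0) {j : ℕ} (hj : j < p) : c j = 0 := by
  have hinj : Function.Injective fun i : Fin p ↦ (i : ZMod p) := fun i i' hii' ↦
    Fin.ext ((natCast_inj_of_lt i.2 i'.2).mp hii')
  have := Matrix.eq_zero_of_forall_pow_sum_mul_pow_eq_zero (v := fun i : Fin p ↦ c i) hinj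
    fun t ↦ by
      rw [Fin.sum_univ_eq_sum_range (fun j ↦ c j * (j : ZMod p) ^ (t : ℕ))]
      exact h t t.2
  exact congrFun this ⟨j, hj⟩

section
open Polynomial

theorem eq_zero_of_forall_mem_quadratic_eq_zero {K : Type*} [Field K] {a b c : K} {Y : Finset K}
    (hY : 2 < #Y) (h : ∀ y ∈ Y, a + b * y + c * y ^ 2 = 0) : a = 0 ∧ b = 0 ∧ c = 0 := by
  have hP := eq_zero_of_natDegree_lt_card_of_eval_eq_zero' (C a + C b * X + C c * X ^ 2) Y
    (by simpa using h) (lt_of_le_of_lt (by compute_degree) hY)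
  exact ⟨by simpa using congrArg (coeff · 0) hP, by simpa using congrArg (coeff · 1) hP,
    by simpa using congrArg (coeff · 2) hP⟩

end

theorem cast_choose_mul_succ {R : Type*} [CommRing R] (n k : ℕ) :
    (n.choose k : R) * (n + 1) = (n + 1).choose k * ((n + 1 : R) - k) := by
  rcases le_or_gt k (n + 1) with hk | hk
  · have := congrArg (Nat.cast : ℕ → R) (Nat.choose_mul_succ_eq n k)
    push_cast [Nat.cast_sub hk] at this
    exact this
  · rw [Nat.choose_eq_zero_of_lt hk, Nat.choose_eq_zero_of_lt (by omega)]
    simp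

theorem eq_zero_of_forall_mem_choose_combination_eq_zero [Fact p.Prime] {m : ℕ} (hm : m + 2 < p)
    {T : Finset ℕ} (hT : 2 < #T) (hTm : ∀ x ∈ T, x ≤ m + 2) {u v w : ZMod p}
    (h : ∀ x ∈ T, u * (m + 2).choose x + v * (m + 1).choose x + w * m.choose x = 0) :
    u = 0 ∧ v = 0 ∧ w = 0 := by
  -- Multiplied by `(m + 1) (m + 2) / (m + 2).choose x`, the relation becomes
  -- `u (m + 1) (m + 2) + v (m + 1) (m + 2 - x) + w (m + 1 - x) (m + 2 - x) = 0`.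
  have hquad : ∀ y ∈ T.image (Nat.cast : ℕ → ZMod p), (u + v + w) * ((m + 1) * (m + 2))
      + -(v * (m + 1) + w * (2 * m + 3)) * y + w * y ^ 2 = 0 := by
    simp only [mem_image, forall_exists_index, and_imp, forall_apply_eq_imp_iff₂]
    intro x hx
    have h1 := cast_choose_mul_succ (R := ZMod p) (m + 1) x
    have h0 := cast_choose_mul_succ (R := ZMod p) m x
    push_cast at h0 h1
    refine (mul_eq_zero.mp ?_).resolve_left (cast_choose_ne_zero hm (hTm x hx))
    linear_combination ((m + 1) * (m + 2) : ZMod p) * h x hx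
      - (v * (m + 1) + w * (m + 1 - x)) * h1 - w * (m + 2) * h0
  have hcard : #(T.image (Nat.cast : ℕ → ZMod p)) = #T := card_image_of_injOn
    fun x hx y hy hxy ↦ (natCast_inj_of_lt (by have := hTm x hx; omega)
      (by have := hTm y hy; omega)).mp hxy
  obtain ⟨ha, hb, hc⟩ := eq_zero_of_forall_mem_quadratic_eq_zero (hcard ▸ hT) hquad
  have hm1 : (m + 1 : ZMod p) ≠ 0 := mod_cast natCast_ne_zero_of_lt (a := m + 1) (by omega) hm.le
  have hm2 : (m + 2 : ZMod p) ≠ 0 := mod_cast natCast_ne_zero_of_lt (a := m + 2) (by omega) hm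
  subst hc
  have hv : v = 0 := by simpa [hm1] using hb
  subst hv
  simpa [hm1, hm2] using ha

theorem exists_finset_add_modEq (hp : 3 < p) {m S : ℕ} (hm : m + 3 ≤ p) (hS : p ≤ m + S)
    (τ : ℕ) : ∃ T : Finset ℕ, 2 < #T ∧ ∀ x ∈ T, x ≤ m + 2 ∧
      ∃ s ≤ S, x + s ≡ τ [MOD p - 1] ∧ (s = 0 → 3 ≤ x) ∧ (s = S → x < m) := by
  -- `x + s = t + (p - 1)` on the first interval and `x + s = t` on the second
  have ht : τ % (p - 1) < p - 1 := Nat.mod_lt _ (by omega)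
  have hτ : τ % (p - 1) ≡ τ [MOD p - 1] := Nat.mod_modEq τ _
  set t := τ % (p - 1)
  refine ⟨Ico (t + (p - 1) + 1 - S) (min (m + 3) (t + (p - 1) + 1))
    ∪ Ico (t - S) (min (m + 3) t), ?_, fun x hx ↦ ?_⟩
  · have := card_union_add_card_inter (Ico (t + (p - 1) + 1 - S) (min (m + 3) (t + (p - 1) + 1)))
      (Ico (t - S) (min (m + 3) t))
    rw [Ico_inter_Ico, Nat.card_Ico, Nat.card_Ico, Nat.card_Ico] at this
    omega
  rcases mem_union.mp hx with hx | hx <;> rw [mem_Ico] at hx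
  · refine ⟨by omega, t + (p - 1) - x, by omega, ?_, by omega, by omega⟩
    rw [show x + (t + (p - 1) - x) = t + (p - 1) by omega]
    exact (Nat.add_mod_right t _).trans hτ
  · refine ⟨by omega, t - x, by omega, ?_, by omega, by omega⟩
    rw [show x + (t - x) = t by omega]
    exact hτ

theorem eq_zero_of_forall_modEq_choose_combination_eq_zero [Fact p.Prime] (hp : 3 < p)
    {m N n : ℕ} (hn : n = m + p * N) (hm : m + 3 ≤ p) (hS : p ≤ m + (Nat.digits p N).sum)
    {u v w : ZMod p} (τ : ℕ)
    (h : ∀ i, 3 ≤ i → i < n → i ≡ τ [MOD p - 1] →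
      u * (n + 2).choose i + v * (n + 1).choose i + w * n.choose i = 0) :
    u = 0 ∧ v = 0 ∧ w = 0 := by
  obtain ⟨T, hT, hTadm⟩ := exists_finset_add_modEq hp hm hS τ
  refine eq_zero_of_forall_mem_choose_combination_eq_zero (by omega) hT
    (fun x hx ↦ (hTadm x hx).1) fun x hx ↦ ?_
  obtain ⟨hxm, s, hsS, hxs, hs0, hsS'⟩ := hTadm x hx
  obtain ⟨M, rfl, hM⟩ := exists_digits_sum_eq_and_choose_ne_zero N hsS
  have hMN : M ≤ N := by
    by_contra hMN
    exact hM (by rw [Nat.choose_eq_zero_of_lt (by omega), Nat.cast_zero])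
  -- Use `i = x + p M`: by Lucas `choose (n + j) i = choose (m + j) x * choose N M`, and
  -- `p M ≡ M ≡ s` modulo `p - 1`; the conditions on `s = 0` and `s = S` keep `i` in `[3, n)`.
  have hi3 : 3 ≤ x + p * M := by
    rcases Nat.eq_zero_or_pos M with rfl | hM0
    · simpa using hs0 (by simp)
    · nlinarith
  have hin : x + p * M < n := by
    subst hn
    rcases hMN.eq_or_lt with rfl | hMN
    · have := hsS' rfl
      omega
    · nlinarith
  have hiτ : x + p * M ≡ τ [MOD p - 1] := by
    have hp1 : 1 ≡ p [MOD p - 1] := (Nat.modEq_iff_dvd' (by omega)).mpr dvd_rfl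
    have hM : p * M ≡ (Nat.digits p M).sum [MOD p - 1] := (hp1.mul_right M).symm.trans <| by
      rw [one_mul]
      exact Nat.modEq_digits_sum _ p (Eq.trans hp1.symm (Nat.mod_eq_of_lt (by omega))) M
    exact (hM.add_left x).trans hxs
  have hcomb := h _ hi3 hin hiτ
  rw [hn, show m + p * N + 2 = m + 2 + p * N by ring, show m + p * N + 1 = m + 1 + p * N by ring,
    cast_choose_add_mul (by omega) (by omega), cast_choose_add_mul (by omega) (by omega),
    cast_choose_add_mul (by omega) (by omega)] at hcomb
  refine (mul_eq_zero.mp ?_).resolve_left hM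
  linear_combination hcomb

theorem cast_choose_combination_eq {R : Type*} [CommRing R] (n k : ℕ) (a b c : R) :
    (n.choose (k + 2) : R) * a + n.choose (k + 1) * b + n.choose k * c
      = c * (n + 2).choose (k + 2) + (b - 2 * c) * (n + 1).choose (k + 2)
        + (a - b + c) * n.choose (k + 2) := by
  simp only [Nat.choose_succ_succ', Nat.cast_add]
  ring

/-- The vanishing of the coefficients of `X ^ (k + 2)`, `k < n`, in the identity under
`X 0 ↦ 1`, `X 1 ↦ X`. -/
def CoeffRelations (n : ℕ) (d e f : ℕ → ZMod p) : Prop :=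
  ∀ k < n, n.choose (k + 2) * powerSum d (n - (k + 2))
    + n.choose (k + 1) * powerSum f (n - (k + 1)) + n.choose k * powerSum e k = 0

theorem CoeffRelations.powerSum_eq_zero_of_ne_zero_of_add_three_le [Fact p.Prime] {m N n : ℕ}
    {d e f : ℕ → ZMod p} (h : CoeffRelations n d e f) (hp : 3 < p) (hn : n = m + p * N)
    (hm : m + 3 ≤ p) (hS : p ≤ m + (Nat.digits p N).sum) {k : ℕ} (hk : k ≠ 0)
    (hkn : k + 3 ≤ n) :
    powerSum e k = 0 ∧ powerSum f (n - (k + 1)) = 0 ∧ powerSum d (n - (k + 2)) = 0 := by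
  -- Along the class of `k + 2` modulo `p - 1` the three power sums are constant.
  obtain ⟨hu, hv, hw⟩ := eq_zero_of_forall_modEq_choose_combination_eq_zero hp hn hm hS
    (u := powerSum e k) (v := powerSum f (n - (k + 1)) - 2 * powerSum e k)
    (w := powerSum d (n - (k + 2)) - powerSum f (n - (k + 1)) + powerSum e k) (k + 2)
    fun i hi3 hin hik ↦ by
      obtain ⟨k', rfl⟩ : ∃ k', i = k' + 2 := ⟨i - 2, by omega⟩
      have hk' : k' ≡ k [MOD p - 1] := Nat.ModEq.add_right_cancel' 2 hik
      have hrel := h k' (by omega)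
      rw [powerSum_eq_of_modEq e (by omega) hk hk',
        powerSum_eq_of_modEq f (by omega) (by omega) (Nat.ModEq.sub_left (by omega) (by omega)
          (hk'.add_right 1)),
        powerSum_eq_of_modEq d (by omega) (by omega) (Nat.ModEq.sub_left (by omega) (by omega)
          (hk'.add_right 2)), cast_choose_combination_eq] at hrel
      exact hrel
  refine ⟨hu, by linear_combination hv + 2 * hu, by linear_combination hw + hv + hu⟩

theorem CoeffRelations.powerSum_eq_zero [Fact p.Prime] {m N n : ℕ} {d e f : ℕ → ZMod p}
    (h : CoeffRelations n d e f) (hp : 3 < p) (hn : n = m + p * N) (hm : m + 3 ≤ p)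
    (hS : p ≤ m + (Nat.digits p N).sum) (t : ℕ) :
    powerSum d t = 0 ∧ powerSum e t = 0 ∧ powerSum f t = 0 := by
  have hN : 3 ≤ N := (Nat.digit_sum_le p N).trans' (by omega)
  have hpn : 3 * p ≤ n := by subst hn; nlinarith
  have hclass := fun k hk hkn ↦
    h.powerSum_eq_zero_of_ne_zero_of_add_three_le hp hn hm hS (k := k) hk hkn
  have hd : ∀ t ≠ 0, powerSum d t = 0 := fun t ↦ powerSum_eq_zero_of_forall_Ico one_ne_zero
    fun t' ht' ↦ by
      rw [mem_Ico] at ht'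
      simpa [show n - (n - 2 - t' + 2) = t' by omega] using
        (hclass (n - 2 - t') (by omega) (by omega)).2.2
  have he : ∀ t ≠ 0, powerSum e t = 0 := fun t ↦ powerSum_eq_zero_of_forall_Ico one_ne_zero
    fun t' ht' ↦ by
      rw [mem_Ico] at ht'
      exact (hclass t' (by omega) (by omega)).1
  have hf : ∀ t ≠ 0, powerSum f t = 0 := fun t ↦ powerSum_eq_zero_of_forall_Ico two_ne_zero
    fun t' ht' ↦ by
      rw [mem_Ico] at ht'
      simpa [show n - (n - 1 - t' + 1) = t' by omega] using
        (hclass (n - 1 - t') (by omega) (by omega)).2.1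
  rcases eq_or_ne t 0 with rfl | ht
  · refine ⟨?_, ?_, ?_⟩
    · have := h (n - 2) (by omega)
      rw [hf _ (by omega), he _ (by omega), show n - 2 + 2 = n by omega] at this
      simpa using this
    · have := h 0 (by omega)
      rw [hd _ (by omega), hf _ (by omega)] at this
      simpa using this
    · have := h (n - 1) (by omega)
      rw [he _ (by omega), show n - 1 + 2 = n + 1 by omega, show n - 1 + 1 = n by omega] at this
      simpa using this
  · exact ⟨hd t ht, he t ht, hf t ht⟩

section
open Polynomial

theorem coeff_one_add_C_mul_X_pow {R : Type*} [CommSemiring R] (a : R) (n k : ℕ) :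
    ((1 + C a * X) ^ n).coeff k = a ^ k * n.choose k := by
  rw [add_comm, add_pow, finsetSum_coeff]
  simp only [mul_pow, ← C_pow, one_pow, mul_one, coeff_mul_natCast, coeff_C_mul_X_pow]
  simp only [ite_mul, zero_mul]
  rw [sum_ite_eq]
  split_ifs with hk
  · rfl
  · rw [Nat.choose_eq_zero_of_lt (by simpa using hk), Nat.cast_zero, mul_zero]

theorem coeff_sum_natCast_add_X_pow (c : ℕ → ZMod p) (n k : ℕ) :
    (∑ j ∈ range p, C (c j) * ((j : (ZMod p)[X]) + X) ^ n).coeff k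
      = n.choose k * powerSum c (n - k) := by
  simp only [finsetSum_coeff, coeff_C_mul, powerSum, mul_sum]
  refine sum_congr rfl fun j _ ↦ ?_
  rw [← map_natCast C, add_comm, coeff_X_add_C_pow]
  ring

theorem coeff_sum_one_add_natCast_mul_X_pow (c : ℕ → ZMod p) (n k : ℕ) :
    (∑ j ∈ range p, C (c j) * (1 + (j : (ZMod p)[X]) * X) ^ n).coeff k
      = n.choose k * powerSum c k := by
  simp only [finsetSum_coeff, coeff_C_mul, powerSum, mul_sum]
  refine sum_congr rfl fun j _ ↦ ?_
  rw [← map_natCast C, coeff_one_add_C_mul_X_pow]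
  ring

theorem coeffRelations_of_dehomogenized_eq_zero {n : ℕ} {A B D : ZMod p} {d e f : ℕ → ZMod p}
    (h : C A + C B * X ^ (n + 2) + C D * X
      + ∑ j ∈ range p, C (d j) * ((j : (ZMod p)[X]) + X) ^ n
      + ∑ j ∈ range p, C (e j) * X ^ 2 * (1 + (j : (ZMod p)[X]) * X) ^ n
      + ∑ j ∈ range p, C (f j) * X * ((j : (ZMod p)[X]) + X) ^ n = 0) :
    CoeffRelations n d e f := by
  intro k hk
  simp only [mul_right_comm _ X, mul_right_comm _ (X ^ 2), ← sum_mul] at h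
  have := congrArg (coeff · (k + 2)) h
  simp only [coeff_add, coeff_C, coeff_C_mul_X_pow, coeff_sum_natCast_add_X_pow,
    coeff_mul_X_pow, coeff_mul_X, coeff_sum_one_add_natCast_mul_X_pow, coeff_zero,
    show k + 2 ≠ n + 2 by omega, show k + 2 ≠ 0 by omega, show k + 1 ≠ 0 by omega,
    if_false] at this
  linear_combination this

theorem eq_zero_of_dehomogenized_eq_zero [Fact p.Prime] (hp : 3 < p) {m N n : ℕ} (hn : n = m + p * N)
    (hm : m + 3 ≤ p) (hS : p ≤ m + (Nat.digits p N).sum) {A B D : ZMod p}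
    {d e f : ℕ → ZMod p}
    (h : C A + C B * X ^ (n + 2) + C D * X
      + ∑ j ∈ range p, C (d j) * ((j : (ZMod p)[X]) + X) ^ n
      + ∑ j ∈ range p, C (e j) * X ^ 2 * (1 + (j : (ZMod p)[X]) * X) ^ n
      + ∑ j ∈ range p, C (f j) * X * ((j : (ZMod p)[X]) + X) ^ n = 0) :
    A = 0 ∧ B = 0 ∧ D = 0 ∧ (∀ j ∈ range p, d j = 0) ∧ (∀ j ∈ range p, e j = 0) ∧
      (∀ j ∈ range p, f j = 0) := by
  have hpow := (coeffRelations_of_dehomogenized_eq_zero h).powerSum_eq_zero hp hn hm hS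
  have hd : ∀ j ∈ range p, d j = 0 := fun j hj ↦
    eq_zero_of_forall_powerSum_eq_zero (fun t _ ↦ (hpow t).1) (mem_range.mp hj)
  have he : ∀ j ∈ range p, e j = 0 := fun j hj ↦
    eq_zero_of_forall_powerSum_eq_zero (fun t _ ↦ (hpow t).2.1) (mem_range.mp hj)
  have hf : ∀ j ∈ range p, f j = 0 := fun j hj ↦
    eq_zero_of_forall_powerSum_eq_zero (fun t _ ↦ (hpow t).2.2) (mem_range.mp hj)
  rw [sum_eq_zero fun j hj ↦ by simp [hd j hj], sum_eq_zero fun j hj ↦ by simp [he j hj],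
    sum_eq_zero fun j hj ↦ by simp [hf j hj]] at h
  refine ⟨?_, ?_, ?_, hd, he, hf⟩
  · simpa using congrArg (coeff · 0) h
  · simpa using congrArg (coeff · (n + 2)) h
  · simpa using congrArg (coeff · 1) h
end

open MvPolynomial

theorem lin_indep_full_dim_general (p : ℕ) (hp : p.Prime) (hp3 : 3 < p) (r : ℕ)
    (hr0 : ¬ p ∣ r) (hr1 : ¬ p ∣ (r - 1))
    (hdig : p ≤ (Nat.digits p (r - 2)).sum)
    (A B D : ZMod p) (d e f : ℕ → ZMod p)
    (h : (C A * X 0 ^ r + C B * X 1 ^ r + C D * X 0 ^ (r - 1) * X 1 +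
        (∑ j ∈ Finset.range p,
          C (d j) * X 0 ^ 2 * (C ((j : ZMod p)) * X 0 + X 1) ^ (r - 2)) +
        (∑ k ∈ Finset.range p,
          C (e k) * X 1 ^ 2 * (X 0 + C ((k : ZMod p)) * X 1) ^ (r - 2)) +
        (∑ l ∈ Finset.range p,
          C (f l) * (X 0 * X 1) * (C ((l : ZMod p)) * X 0 + X 1) ^ (r - 2)) :
        MvPolynomial (Fin 2) (ZMod p)) = 0) :
    A = 0 ∧ B = 0 ∧ D = 0 ∧
      (∀ j ∈ Finset.range p, d j = 0) ∧ (∀ k ∈ Finset.range p, e k = 0) ∧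
      (∀ l ∈ Finset.range p, f l = 0) := by
  have := Fact.mk hp
  obtain ⟨n, rfl⟩ : ∃ n, r = n + 2 := ⟨r - 2, by
    by_contra hr
    rw [show r - 2 = 0 by omega, Nat.digits_zero, List.sum_nil] at hdig
    omega⟩
  rw [Nat.add_sub_cancel] at hdig h
  have hdiv := Nat.mod_add_div n p
  have hm : n % p + 3 ≤ p := by
    by_contra
    have := Nat.mod_lt n hp.pos
    rcases (show n % p + 2 = p ∨ n % p + 1 = p by omega) with hm | hm
    · exact hr0 ⟨n / p + 1, by rw [mul_add]; omega⟩
    · exact hr1 ⟨n / p + 1, by rw [mul_add]; omega⟩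
  rw [← hdiv, digits_sum_add_mul hp.one_lt (Nat.mod_lt _ hp.pos)] at hdig
  have hpoly := congrArg (aeval ![(1 : Polynomial (ZMod p)), Polynomial.X]) h
  simp only [map_add, map_mul, map_pow, map_sum, map_natCast, aeval_C, aeval_X,
    Matrix.cons_val_zero, Matrix.cons_val_one, Polynomial.algebraMap_eq, one_pow, mul_one,
    one_mul] at hpoly
  exact eq_zero_of_dehomogenized_eq_zero hp3 hdiv.symm hm hdig hpoly

/-- For a prime `p > 3` and `r ≥ 3p+2` with `p ∤ r`, `p ∤ r-1` and base-`p` digit sum of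
`r-2` at least `p`, the `3p+3` polynomials `X^r`, `Y^r`, `X^{r-1}Y`, `X²(jX+Y)^{r-2}`,
`Y²(X+kY)^{r-2}`, `XY(lX+Y)^{r-2}` (with `j,k,l ∈ F_p`) are linearly independent. -/
theorem lin_indep_full_dim (p : ℕ) (hp : p.Prime) (hp3 : 3 < p) (r : ℕ)
    (hr : 3 * p + 2 ≤ r) (hr0 : ¬ p ∣ r) (hr1 : ¬ p ∣ (r - 1))
    (hdig : p ≤ (Nat.digits p (r - 2)).sum)
    (A B D : ZMod p) (d e f : ℕ → ZMod p)
    (h : (C A * X 0 ^ r + C B * X 1 ^ r + C D * X 0 ^ (r - 1) * X 1 +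
        (∑ j ∈ Finset.range p,
          C (d j) * X 0 ^ 2 * (C ((j : ZMod p)) * X 0 + X 1) ^ (r - 2)) +
        (∑ k ∈ Finset.range p,
          C (e k) * X 1 ^ 2 * (X 0 + C ((k : ZMod p)) * X 1) ^ (r - 2)) +
        (∑ l ∈ Finset.range p,
          C (f l) * (X 0 * X 1) * (C ((l : ZMod p)) * X 0 + X 1) ^ (r - 2)) :
        MvPolynomial (Fin 2) (ZMod p)) = 0) :
    A = 0 ∧ B = 0 ∧ D = 0 ∧
      (∀ j ∈ Finset.range p, d j = 0) ∧ (∀ k ∈ Finset.range p, e k = 0) ∧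
      (∀ l ∈ Finset.range p, f l = 0) :=
  lin_indep_full_dim_general p hp hp3 r hr0 hr1 hdig A B D d e f h
end
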